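/- arXiv:2402.01403 — 10 statements merged into one kernel-verified Lean document; each statement's English description precedes it below -/
import Mathlib

section
/- Let H be an r×n parity-check matrix over F_2 such that every column has Hamming weight exactly c, and let d be a positive integer. Suppose that for every nonempty set T of column indices with |T| ≤ d, the union of the supports of the columns indexed by T has more than c·|T|/2 elements. Then every nonzero vector x ∈ F_2^n with H·xᵀ = 0 has Hamming weight strictly greater than d. (A (c, d, c/2)-expander code has minimum distance greater than d.) -/
/-!
Let `S` be the support of a nonzero codeword `x`. Since `H x = 0` over `F_2`, every row of `H`
meets `S` in an even number of positions, so every row in the neighbourhood `N(S)` of `S` is hit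
at least twice. Counting the `c |S|` ones of the columns in `S` gives `2 |N(S)| ≤ c |S|`, which
contradicts the expansion hypothesis unless `|S| > d`.
-/

open Finset Matrix

def colSupport {r n : ℕ} (H : Matrix (Fin r) (Fin n) (ZMod 2)) (i : Fin n) :
    Finset (Fin r) :=
  Finset.univ.filter (fun j => H j i = 1)

lemma ZMod.sum_eq_card_filter_eq_one {ι : Type*} (s : Finset ι) (f : ι → ZMod 2) :
    ∑ i ∈ s, f i = #{i ∈ s | f i = 1} := by
  rw [Finset.natCast_card_filter]
  refine Finset.sum_congr rfl fun i _ => ?_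
  generalize f i = a
  fin_cases a <;> rfl

theorem Matrix.even_card_support_inter_row_of_mulVec_eq_zero {m n : Type*} [Fintype n]
    {H : Matrix m n (ZMod 2)} {x : n → ZMod 2} (hker : H *ᵥ x = 0) (j : m) :
    Even #{i | x i ≠ 0 ∧ H j i = 1} := by
  have hrow := congrFun hker j
  rw [Pi.zero_apply, mulVec, dotProduct, ZMod.sum_eq_card_filter_eq_one] at hrow
  have hcard : #{i | H j i * x i = 1} = #{i | x i ≠ 0 ∧ H j i = 1} := by
    congr 1
    have hmul : ∀ a b : ZMod 2, a * b = 1 ↔ b ≠ 0 ∧ a = 1 := by decide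
    exact filter_congr fun i _ => hmul (H j i) (x i)
  exact ZMod.natCast_eq_zero_iff_even.mp (hcard ▸ hrow)

theorem two_mul_card_biUnion_colSupport_le {r n : ℕ} {H : Matrix (Fin r) (Fin n) (ZMod 2)}
    {x : Fin n → ZMod 2} (hker : H *ᵥ x = 0) {c : ℕ} (hcol : ∀ i, #(colSupport H i) ≤ c) :
    2 * #(({i | x i ≠ 0} : Finset (Fin n)).biUnion (colSupport H)) ≤
      c * #{i | x i ≠ 0} := by
  set S : Finset (Fin n) := {i | x i ≠ 0}
  have key := card_mul_le_card_mul (s := S.biUnion (colSupport H)) (t := S) (m := 2) (n := c)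
    (r := fun j i => j ∈ colSupport H i) ?_ ?_
  · linarith
  · intro j hj
    obtain ⟨i, hiS, hji⟩ := mem_biUnion.mp hj
    have hpos : 0 < #(S.bipartiteAbove (fun j i => j ∈ colSupport H i) j) :=
      card_pos.mpr ⟨i, mem_filter.mpr ⟨hiS, hji⟩⟩
    obtain ⟨k, hk⟩ : Even #(S.bipartiteAbove (fun j i => j ∈ colSupport H i) j) := by
      simpa only [bipartiteAbove, S, colSupport, filter_filter, mem_filter, mem_univ, true_and]
        using even_card_support_inter_row_of_mulVec_eq_zero hker j
    omega
  · exact fun i _ => (card_le_card fun j hj => (mem_filter.mp hj).2).trans (hcol i)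

theorem expander_min_distance_general {r n : ℕ} (H : Matrix (Fin r) (Fin n) (ZMod 2))
    (c d : ℕ)
    (hcol : ∀ i : Fin n, (colSupport H i).card = c)
    (hexp : ∀ T : Finset (Fin n), T.Nonempty → T.card ≤ d →
      c * T.card < 2 * (T.biUnion (colSupport H)).card)
    (x : Fin n → ZMod 2) (hx : x ≠ 0) (hker : H.mulVec x = 0) :
    d < (Finset.univ.filter (fun i => x i ≠ 0)).card := by
  by_contra! hle
  have hS : (Finset.univ.filter (fun i => x i ≠ 0)).Nonempty := by
    obtain ⟨i, hi⟩ := Function.ne_iff.mp hx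
    exact ⟨i, mem_filter.mpr ⟨mem_univ i, hi⟩⟩
  have hexpands := hexp _ hS hle
  have hcount := two_mul_card_biUnion_colSupport_le hker fun i => (hcol i).le
  omega

/-- A `(c, d, c/2)`-expander code has minimum distance greater than `d`. -/
theorem expander_min_distance {r n : ℕ} (H : Matrix (Fin r) (Fin n) (ZMod 2))
    (c d : ℕ) (hd : 0 < d)
    (hcol : ∀ i : Fin n, (colSupport H i).card = c)
    (hexp : ∀ T : Finset (Fin n), T.Nonempty → T.card ≤ d →
      c * T.card < 2 * (T.biUnion (colSupport H)).card)
    (x : Fin n → ZMod 2) (hx : x ≠ 0) (hker : H.mulVec x = 0) :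
    d < (Finset.univ.filter (fun i => x i ≠ 0)).card :=
  expander_min_distance_general H c d hcol hexp x hx hker
end

section
/- Let B_1, …, B_t (t ≥ 1) be finite sets, each of size exactly c, such that 4·|B_1 ∪ ⋯ ∪ B_t| > 3·c·t. Let S be the syndrome of B_1, …, B_t. Then there exists an index i with 2·|B_i ∩ S| > c, i.e., some set B_i has more than half of its elements in S. -/
/-!
Let `m p` be the number of sets containing `p`, so that `∑ᵢ |Bᵢ ∩ X| = ∑_{p ∈ X} m p` for every
`X`. A point of the union outside the syndrome has even, hence at least `2`, multiplicity, while
a point of the syndrome has multiplicity at least `1`; summing `2 ≤ m p + [p ∈ S] m p` over the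
union `U` gives `2|U| ≤ c t + ∑ᵢ |Bᵢ ∩ S|`. With `4|U| > 3 c t` this forces
`∑ᵢ 2|Bᵢ ∩ S| > c t`, and some block exceeds the average.
-/

/-- The syndrome of a family of finite sets: the set of points lying in an odd
number of the sets (their iterated symmetric difference). -/
def syndrome {α ι : Type*} [DecidableEq α] [DecidableEq ι]
    (T : Finset ι) (B : ι → Finset α) : Finset α :=
  (T.biUnion B).filter (fun p => Odd (T.filter (fun i => p ∈ B i)).card)

open Finset

section Syndrome

variable {α ι : Type*} [DecidableEq α]

def coverCount (T : Finset ι) (B : ι → Finset α) (p : α) : ℕ :=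
  #{i ∈ T | p ∈ B i}

theorem sum_card_inter_eq_sum_coverCount (T : Finset ι) (B : ι → Finset α) (X : Finset α) :
    ∑ i ∈ T, #(B i ∩ X) = ∑ p ∈ X, coverCount T B p := by
  simp only [coverCount, inter_comm _ X, ← filter_mem_eq_inter, card_eq_sum_ones, sum_filter]
  exact sum_comm

theorem sum_card_eq_sum_coverCount [DecidableEq ι] (T : Finset ι) (B : ι → Finset α) :
    ∑ i ∈ T, #(B i) = ∑ p ∈ T.biUnion B, coverCount T B p := by
  rw [← sum_card_inter_eq_sum_coverCount]
  refine sum_congr rfl fun i hi => ?_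
  rw [inter_eq_left.mpr (subset_biUnion_of_mem B hi)]

theorem coverCount_pos_of_mem_biUnion [DecidableEq ι] {T : Finset ι} {B : ι → Finset α} {p : α}
    (hp : p ∈ T.biUnion B) : 0 < coverCount T B p := by
  obtain ⟨i, hi, hpi⟩ := mem_biUnion.mp hp
  exact card_pos.mpr ⟨i, mem_filter.mpr ⟨hi, hpi⟩⟩

theorem two_mul_card_biUnion_le [DecidableEq ι] (T : Finset ι) (B : ι → Finset α) :
    2 * #(T.biUnion B) ≤ ∑ i ∈ T, #(B i) + ∑ i ∈ T, #(B i ∩ syndrome T B) := by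
  rw [sum_card_eq_sum_coverCount, sum_card_inter_eq_sum_coverCount, syndrome, sum_filter,
    ← sum_add_distrib, mul_comm, ← smul_eq_mul, ← sum_const]
  refine sum_le_sum fun p hp => ?_
  have hpos := coverCount_pos_of_mem_biUnion hp
  unfold coverCount at hpos ⊢
  split_ifs with hodd
  · omega
  · obtain ⟨k, hk⟩ := Nat.not_odd_iff_even.mp hodd
    omega

end Syndrome

theorem exists_block_majority_in_syndrome_general {α : Type*} [DecidableEq α] {t c : ℕ}
    (B : Fin t → Finset α) (hB : ∀ i, (B i).card = c)
    (hU : 3 * (c * t) < 4 * (Finset.univ.biUnion B).card) :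
    ∃ i : Fin t, c < 2 * (B i ∩ syndrome Finset.univ B).card := by
  have hcount := two_mul_card_biUnion_le univ B
  simp only [hB, sum_const, card_univ, Fintype.card_fin, smul_eq_mul] at hcount
  have hsum : ∑ _i : Fin t, c < ∑ i, 2 * #(B i ∩ syndrome univ B) := by
    simp only [← mul_sum, sum_const, card_univ, Fintype.card_fin, smul_eq_mul]
    linarith
  obtain ⟨i, -, hi⟩ := exists_lt_of_sum_lt hsum
  exact ⟨i, hi⟩

/-- If `t ≥ 1` finite sets, each of size `c`, satisfy `4·|union| > 3·c·t`, then
some set has more than half of its elements in the syndrome. -/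
theorem exists_block_majority_in_syndrome {α : Type*} [DecidableEq α] {t c : ℕ}
    (ht : 1 ≤ t) (B : Fin t → Finset α) (hB : ∀ i, (B i).card = c)
    (hU : 3 * (c * t) < 4 * (Finset.univ.biUnion B).card) :
    ∃ i : Fin t, c < 2 * (B i ∩ syndrome Finset.univ B).card :=
  exists_block_majority_in_syndrome_general B hB hU
end

section
/- Let B_1, …, B_t (t ≥ 1) be finite sets, each of size exactly c, such that 4·|B_1 ∪ ⋯ ∪ B_t| > 3·c·t. Let S be the syndrome of B_1, …, B_t. Then 2·|S| > c·t, i.e., the number of points covered an odd number of times exceeds c·t/2. -/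
/-! Every point of the union lies in at least one set, and a point lying in an even number of
sets lies in at least two. Summing multiplicities over the union gives
`2·|union| ≤ c·t + |S|`, which together with `4·|union| > 3·c·t` forces `2·|S| > c·t`. -/

open Finset

theorem Nat.two_le_add_ite_odd {n : ℕ} (hn : 0 < n) : 2 ≤ n + if Odd n then 1 else 0 := by
  split_ifs with hodd
  · omega
  · obtain ⟨k, rfl⟩ := Nat.not_odd_iff_even.mp hodd
    omega

section Multiplicity

variable {α ι : Type*} [DecidableEq α] (T : Finset ι) (B : ι → Finset α)

theorem sum_card_filter_mem_biUnion :
    ∑ p ∈ T.biUnion B, #{i ∈ T | p ∈ B i} = ∑ i ∈ T, #(B i) := by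
  refine (sum_card_bipartiteAbove_eq_sum_card_bipartiteBelow (r := fun p i => p ∈ B i)).trans
    (sum_congr rfl fun i hi => ?_)
  rw [bipartiteBelow, filter_mem_eq_inter, inter_eq_right.mpr (subset_biUnion_of_mem B hi)]

theorem two_mul_card_biUnion_le_sum_card_add_card_syndrome [DecidableEq ι] :
    2 * #(T.biUnion B) ≤ ∑ i ∈ T, #(B i) + #(syndrome T B) := by
  rw [← sum_card_filter_mem_biUnion, syndrome, card_filter, card_eq_sum_ones, mul_sum,
    ← sum_add_distrib]
  refine sum_le_sum fun p hp => ?_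
  obtain ⟨i, hi, hpi⟩ := mem_biUnion.mp hp
  simpa using Nat.two_le_add_ite_odd (card_pos.mpr ⟨i, mem_filter.mpr ⟨hi, hpi⟩⟩)

end Multiplicity

theorem syndrome_card_gt_general {α : Type*} [DecidableEq α] {t c : ℕ}
    (B : Fin t → Finset α) (hB : ∀ i, (B i).card = c)
    (hU : 3 * (c * t) < 4 * (Finset.univ.biUnion B).card) :
    c * t < 2 * (syndrome Finset.univ B).card := by
  have hsum : ∑ i, #(B i) = c * t := by simp [hB, mul_comm]
  have := two_mul_card_biUnion_le_sum_card_add_card_syndrome univ B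
  omega

/-- If `t ≥ 1` finite sets, each of size `c`, satisfy `4·|union| > 3·c·t`, then
the syndrome has more than `c·t/2` elements. -/
theorem syndrome_card_gt {α : Type*} [DecidableEq α] {t c : ℕ}
    (ht : 1 ≤ t) (B : Fin t → Finset α) (hB : ∀ i, (B i).card = c)
    (hU : 3 * (c * t) < 4 * (Finset.univ.biUnion B).card) :
    c * t < 2 * (syndrome Finset.univ B).card :=
  syndrome_card_gt_general B hB hU
end

section
/- Let B_1, …, B_n be finite sets, each of size exactly c, such that |B_i ∩ B_j| ≤ 1 for all distinct indices i ≠ j (a partial geometry with block size c). Let T be a nonempty set of indices of size t with 2·t ≤ c, and let S be the syndrome of the sets B_i with i ∈ T. Then for every i ∈ T one has |B_i ∩ S| ≥ c − t + 1, for every j ∉ T one has |B_j ∩ S| ≤ t, and consequently |B_i ∩ S| > |B_j ∩ S| for all i ∈ T and j ∉ T. -/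
open Finset

section

variable {α ι : Type*} [DecidableEq α]

theorem card_inter_biUnion_le_card {A : Finset α} {s : Finset ι} {B : ι → Finset α}
    (h : ∀ k ∈ s, #(A ∩ B k) ≤ 1) : #(A ∩ s.biUnion B) ≤ #s := by
  simpa [inter_biUnion] using card_biUnion_le_card_mul s (fun k => A ∩ B k) 1 h

variable [DecidableEq ι]

theorem syndrome_subset_biUnion (T : Finset ι) (B : ι → Finset α) :
    syndrome T B ⊆ T.biUnion B :=
  filter_subset _ _

theorem sdiff_biUnion_erase_subset_syndrome {T : Finset ι} {B : ι → Finset α} {i : ι}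
    (hi : i ∈ T) : B i \ (T.erase i).biUnion B ⊆ syndrome T B := by
  intro p hp
  obtain ⟨hpi, hp_others⟩ := mem_sdiff.mp hp
  have hcover : T.filter (fun k => p ∈ B k) = {i} := by
    ext k
    simp only [mem_filter, mem_singleton]
    constructor
    · rintro ⟨hk, hpk⟩
      by_contra hki
      exact hp_others (mem_biUnion.mpr ⟨k, mem_erase.mpr ⟨hki, hk⟩, hpk⟩)
    · rintro rfl
      exact ⟨hi, hpi⟩
  refine mem_filter.mpr ⟨mem_biUnion.mpr ⟨i, hi, hpi⟩, ?_⟩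
  rw [hcover, card_singleton]
  exact odd_one

theorem card_inter_syndrome_le_card {A : Finset α} {T : Finset ι} {B : ι → Finset α}
    (h : ∀ k ∈ T, #(A ∩ B k) ≤ 1) : #(A ∩ syndrome T B) ≤ #T :=
  (card_le_card (inter_subset_inter_left (syndrome_subset_biUnion T B))).trans
    (card_inter_biUnion_le_card h)

theorem card_add_one_le_card_inter_syndrome_add_card {T : Finset ι} {B : ι → Finset α} {i : ι}
    (hi : i ∈ T) (h : ∀ k ∈ T, k ≠ i → #(B i ∩ B k) ≤ 1) :
    #(B i) + 1 ≤ #(B i ∩ syndrome T B) + #T := by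
  set J := (T.erase i).biUnion B
  have hfree : #(B i \ J) ≤ #(B i ∩ syndrome T B) :=
    card_le_card (subset_inter sdiff_subset (sdiff_biUnion_erase_subset_syndrome hi))
  have hlost : #(B i ∩ J) ≤ #(T.erase i) :=
    card_inter_biUnion_le_card fun k hk => h k (mem_of_mem_erase hk) (ne_of_mem_erase hk)
  have hsplit := card_sdiff_add_card_inter (B i) J
  have hT := card_erase_add_one hi
  omega

end

theorem partial_geometry_syndrome_separation_general {α : Type*} [DecidableEq α]
    {n c t : ℕ} (B : Fin n → Finset α) (hB : ∀ i, (B i).card = c)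
    (hgeo : ∀ i j : Fin n, i ≠ j → (B i ∩ B j).card ≤ 1)
    (T : Finset (Fin n)) (hTcard : T.card = t)
    (ht : 2 * t ≤ c) :
    (∀ i ∈ T, c - t + 1 ≤ (B i ∩ syndrome T B).card) ∧
    (∀ j ∉ T, (B j ∩ syndrome T B).card ≤ t) ∧
    (∀ i ∈ T, ∀ j ∉ T, (B j ∩ syndrome T B).card < (B i ∩ syndrome T B).card) := by
  have herroneous : ∀ i ∈ T, c - t + 1 ≤ #(B i ∩ syndrome T B) := fun i hi => by
    have := card_add_one_le_card_inter_syndrome_add_card hi fun k _ hki => hgeo i k hki.symm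
    rw [hB i, hTcard] at this
    omega
  have hcorrect : ∀ j ∉ T, #(B j ∩ syndrome T B) ≤ t := fun j hj =>
    hTcard ▸ card_inter_syndrome_le_card fun k hk => hgeo j k (ne_of_mem_of_not_mem hk hj).symm
  refine ⟨herroneous, hcorrect, fun i hi j hj => ?_⟩
  have := herroneous i hi
  have := hcorrect j hj
  omega

/-- In a partial geometry with block size `c`, for a syndrome of `t ≤ c/2`
erroneous blocks, every erroneous block meets the syndrome in at least
`c − t + 1` points, every other block in at most `t` points, and hence the
erroneous blocks have strictly larger intersection with the syndrome. -/
theorem partial_geometry_syndrome_separation {α : Type*} [DecidableEq α]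
    {n c t : ℕ} (B : Fin n → Finset α) (hB : ∀ i, (B i).card = c)
    (hgeo : ∀ i j : Fin n, i ≠ j → (B i ∩ B j).card ≤ 1)
    (T : Finset (Fin n)) (hTne : T.Nonempty) (hTcard : T.card = t)
    (ht : 2 * t ≤ c) :
    (∀ i ∈ T, c - t + 1 ≤ (B i ∩ syndrome T B).card) ∧
    (∀ j ∉ T, (B j ∩ syndrome T B).card ≤ t) ∧
    (∀ i ∈ T, ∀ j ∉ T, (B j ∩ syndrome T B).card < (B i ∩ syndrome T B).card) :=
  partial_geometry_syndrome_separation_general B hB hgeo T hTcard ht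
end

section
/- Let B_1, …, B_n be finite sets, each of size exactly c, such that |B_i ∩ B_j| ≤ s for all distinct indices i ≠ j. Let T be a nonempty set of indices of size t with (2t − 1)·s < c, and let S be the syndrome of the sets B_i with i ∈ T. Then for every i ∈ T one has |B_i ∩ S| ≥ c − (t − 1)·s, for every j ∉ T one has |B_j ∩ S| ≤ t·s, and consequently |B_i ∩ S| > |B_j ∩ S| for all i ∈ T and j ∉ T. -/
open Finset

section Syndrome

variable {α ι : Type*} [DecidableEq α] [DecidableEq ι] {T : Finset ι} {B : ι → Finset α}

theorem mem_syndrome {p : α} : p ∈ syndrome T B ↔ Odd #{i ∈ T | p ∈ B i} := by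
  refine ⟨fun hp => (mem_filter.mp hp).2, fun hodd => mem_filter.mpr ⟨?_, hodd⟩⟩
  obtain ⟨i, hi⟩ := card_pos.mp hodd.pos
  exact mem_biUnion.mpr ⟨i, (mem_filter.mp hi).1, (mem_filter.mp hi).2⟩

theorem inter_syndrome_subset_biUnion (A : Finset α) :
    A ∩ syndrome T B ⊆ T.biUnion fun i => A ∩ B i := by
  intro p hp
  obtain ⟨hpA, hpS⟩ := mem_inter.mp hp
  obtain ⟨i, hi⟩ := card_pos.mp (mem_syndrome.mp hpS).pos
  obtain ⟨hiT, hpi⟩ := mem_filter.mp hi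
  exact mem_biUnion.mpr ⟨i, hiT, mem_inter.mpr ⟨hpA, hpi⟩⟩

theorem sdiff_syndrome_subset_biUnion {i : ι} (hi : i ∈ T) :
    B i \ syndrome T B ⊆ (T.erase i).biUnion fun j => B i ∩ B j := by
  intro p hp
  obtain ⟨hpi, hpS⟩ := mem_sdiff.mp hp
  have hi_mem : i ∈ {j ∈ T | p ∈ B j} := mem_filter.mpr ⟨hi, hpi⟩
  have heven : Even #{j ∈ T | p ∈ B j} := Nat.not_odd_iff_even.mp (mt mem_syndrome.mpr hpS)
  have htwo : 1 < #{j ∈ T | p ∈ B j} := by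
    obtain ⟨k, hk⟩ := heven
    have := card_pos.mpr ⟨i, hi_mem⟩
    omega
  obtain ⟨j, hj, hji⟩ := exists_mem_ne htwo i
  obtain ⟨hjT, hpj⟩ := mem_filter.mp hj
  exact mem_biUnion.mpr ⟨j, mem_erase.mpr ⟨hji, hjT⟩, mem_inter.mpr ⟨hpi, hpj⟩⟩

theorem card_inter_syndrome_le {A : Finset α} {s : ℕ} (hs : ∀ i ∈ T, #(A ∩ B i) ≤ s) :
    #(A ∩ syndrome T B) ≤ #T * s :=
  (card_le_card (inter_syndrome_subset_biUnion A)).trans (card_biUnion_le_card_mul _ _ _ hs)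

theorem card_sub_mul_le_card_inter_syndrome {i : ι} {s : ℕ} (hi : i ∈ T)
    (hs : ∀ j ∈ T, j ≠ i → #(B i ∩ B j) ≤ s) :
    #(B i) - (#T - 1) * s ≤ #(B i ∩ syndrome T B) := by
  have hlost : #(B i \ syndrome T B) ≤ (#T - 1) * s := by
    rw [← card_erase_of_mem hi]
    exact (card_le_card (sdiff_syndrome_subset_biUnion hi)).trans
      (card_biUnion_le_card_mul _ _ _ fun j hj => hs j (mem_of_mem_erase hj) (ne_of_mem_erase hj))
  have hsplit := card_inter_add_card_sdiff (B i) (syndrome T B)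
  omega

end Syndrome

theorem partial_design_syndrome_separation_general {α : Type*} [DecidableEq α]
    {n c s t : ℕ} (B : Fin n → Finset α) (hB : ∀ i, (B i).card = c)
    (hgeo : ∀ i j : Fin n, i ≠ j → (B i ∩ B j).card ≤ s)
    (T : Finset (Fin n)) (hTcard : T.card = t)
    (ht : (2 * t - 1) * s < c) :
    (∀ i ∈ T, c - (t - 1) * s ≤ (B i ∩ syndrome T B).card) ∧
    (∀ j ∉ T, (B j ∩ syndrome T B).card ≤ t * s) ∧
    (∀ i ∈ T, ∀ j ∉ T, (B j ∩ syndrome T B).card < (B i ∩ syndrome T B).card) := by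
  have lower : ∀ i ∈ T, c - (t - 1) * s ≤ #(B i ∩ syndrome T B) := fun i hi => by
    simpa only [hB i, hTcard] using
      card_sub_mul_le_card_inter_syndrome hi fun j _ hji => hgeo i j hji.symm
  have upper : ∀ j ∉ T, #(B j ∩ syndrome T B) ≤ t * s := fun j hj => by
    simpa only [hTcard] using
      card_inter_syndrome_le fun i hi => hgeo j i (ne_of_mem_of_not_mem hi hj).symm
  refine ⟨lower, upper, fun i hi j hj => ?_⟩
  have ht_pos : 1 ≤ t := hTcard ▸ card_pos.mpr ⟨i, hi⟩
  have hsum : (2 * t - 1) * s = t * s + (t - 1) * s := by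
    rw [← add_mul]
    congr 1
    omega
  have := lower i hi
  have := upper j hj
  omega

/-- For blocks of size `c` with pairwise intersections of size at most `s` and a
syndrome of `t` erroneous blocks where `(2t − 1)·s < c`, every erroneous block
meets the syndrome in at least `c − (t − 1)·s` points, every other block in at
most `t·s` points, and hence the erroneous blocks have strictly larger
intersection with the syndrome. -/
theorem partial_design_syndrome_separation {α : Type*} [DecidableEq α]
    {n c s t : ℕ} (B : Fin n → Finset α) (hB : ∀ i, (B i).card = c)
    (hgeo : ∀ i j : Fin n, i ≠ j → (B i ∩ B j).card ≤ s)
    (T : Finset (Fin n)) (hTne : T.Nonempty) (hTcard : T.card = t)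
    (ht : (2 * t - 1) * s < c) :
    (∀ i ∈ T, c - (t - 1) * s ≤ (B i ∩ syndrome T B).card) ∧
    (∀ j ∉ T, (B j ∩ syndrome T B).card ≤ t * s) ∧
    (∀ i ∈ T, ∀ j ∉ T, (B j ∩ syndrome T B).card < (B i ∩ syndrome T B).card) :=
  partial_design_syndrome_separation_general B hB hgeo T hTcard ht
end

section
/- Let H be an r×n parity-check matrix over F_2 such that every column has Hamming weight exactly c ≥ 1 and the supports of any two distinct columns intersect in at most one row index (the columns form a partial geometry with block size c). Then every nonzero vector x ∈ F_2^n with H·xᵀ = 0 has Hamming weight strictly greater than c. -/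
open Finset

theorem Finset.card_le_card_of_forall_exists_mem_of_card_inter_le_one {α β : Type*}
    [DecidableEq β] {s : Finset β} {t : Finset α} {B : α → Finset β}
    (hcover : ∀ j ∈ s, ∃ i ∈ t, j ∈ B i) (hmeet : ∀ i ∈ t, (s ∩ B i).card ≤ 1) :
    s.card ≤ t.card :=
  calc s.card ≤ (t.biUnion fun i => s ∩ B i).card := by
        refine card_le_card fun j hj => ?_
        obtain ⟨i, hi, hji⟩ := hcover j hj
        exact mem_biUnion.2 ⟨i, hi, mem_inter.2 ⟨hj, hji⟩⟩
    _ ≤ ∑ i ∈ t, (s ∩ B i).card := card_biUnion_le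
    _ ≤ ∑ _i ∈ t, 1 := sum_le_sum hmeet
    _ = t.card := card_eq_sum_ones t |>.symm

theorem Finset.exists_ne_ne_zero_of_sum_eq_zero {ι M : Type*} [AddCommMonoid M]
    {s : Finset ι} {f : ι → M} (hsum : ∑ i ∈ s, f i = 0) {i₀ : ι} (hi₀ : i₀ ∈ s)
    (hf : f i₀ ≠ 0) : ∃ i ∈ s, i ≠ i₀ ∧ f i ≠ 0 := by
  by_contra! hrest
  exact hf (hsum ▸ (sum_eq_single_of_mem i₀ hi₀ hrest).symm)

theorem exists_mem_support_erase_mem_colSupport {r n : ℕ}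
    {H : Matrix (Fin r) (Fin n) (ZMod 2)} {x : Fin n → ZMod 2} (hker : H.mulVec x = 0)
    {i₀ : Fin n} (hi₀ : x i₀ ≠ 0) {j : Fin r} (hj : j ∈ colSupport H i₀) :
    ∃ i ∈ (univ.filter fun i => x i ≠ 0).erase i₀, j ∈ colSupport H i := by
  have hHj : H j i₀ = 1 := (mem_filter.1 hj).2
  have hrow : ∑ i, H j i * x i = 0 := congrFun hker j
  obtain ⟨i, -, hne, hi⟩ := exists_ne_ne_zero_of_sum_eq_zero hrow (mem_univ i₀)
    (mul_ne_zero (hHj ▸ one_ne_zero) hi₀)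
  refine ⟨i, mem_erase.2 ⟨hne, mem_filter.2 ⟨mem_univ i, right_ne_zero_of_mul hi⟩⟩, ?_⟩
  exact mem_filter.2 ⟨mem_univ j, Fin.eq_one_of_ne_zero _ (left_ne_zero_of_mul hi)⟩

theorem partial_geometry_min_distance_general {r n : ℕ}
    (H : Matrix (Fin r) (Fin n) (ZMod 2)) (c : ℕ)
    (hcol : ∀ i : Fin n, (colSupport H i).card = c)
    (hgeo : ∀ i j : Fin n, i ≠ j → (colSupport H i ∩ colSupport H j).card ≤ 1)
    (x : Fin n → ZMod 2) (hx : x ≠ 0) (hker : H.mulVec x = 0) :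
    c < (Finset.univ.filter (fun i => x i ≠ 0)).card := by
  obtain ⟨i₀, hi₀⟩ := Function.ne_iff.1 hx
  have hcard : (colSupport H i₀).card ≤ ((univ.filter fun i => x i ≠ 0).erase i₀).card :=
    card_le_card_of_forall_exists_mem_of_card_inter_le_one
      (fun _ hj => exists_mem_support_erase_mem_colSupport hker hi₀ hj)
      (fun i hi => hgeo i₀ i (ne_of_mem_erase hi).symm)
  rw [hcol i₀] at hcard
  exact hcard.trans_lt (card_erase_lt_of_mem (mem_filter.2 ⟨mem_univ i₀, hi₀⟩))

/-- If the columns of a parity-check matrix form a partial geometry with block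
size `c ≥ 1`, then every nonzero codeword has Hamming weight greater than `c`. -/
theorem partial_geometry_min_distance {r n : ℕ}
    (H : Matrix (Fin r) (Fin n) (ZMod 2)) (c : ℕ) (hc : 1 ≤ c)
    (hcol : ∀ i : Fin n, (colSupport H i).card = c)
    (hgeo : ∀ i j : Fin n, i ≠ j → (colSupport H i ∩ colSupport H j).card ≤ 1)
    (x : Fin n → ZMod 2) (hx : x ≠ 0) (hker : H.mulVec x = 0) :
    c < (Finset.univ.filter (fun i => x i ≠ 0)).card :=
  partial_geometry_min_distance_general H c hcol hgeo x hx hker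
end

section
/- (Tanner's eigenvalue bound on the minimum distance.) Let H be an r×n real matrix with all entries in {0,1}, such that every column sums to c and every row sums to d, and set Q = Hᵀ·H (so the all-ones vector 𝟙 ∈ ℝ^n satisfies Q·𝟙 = c·d·𝟙). Suppose λ₂ is a real number with λ₂ < c·d such that xᵀ·Q·x ≤ λ₂·xᵀ·x for every x ∈ ℝ^n orthogonal to 𝟙. Then every vector z ∈ ℝ^n with all entries in {0,1}, z ≠ 0, such that every coordinate of H·z is an even integer, has weight w = Σᵢ zᵢ satisfying w ≥ n·(2c − λ₂)/(c·d − λ₂). -/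
/-!
Write `Q = Hᵀ H` and `w = ∑ zᵢ`. Since `H z` has even integer entries, each satisfies
`uⱼ² ≥ 2 uⱼ`, so `zᵀ Q z = ‖H z‖² ≥ 2 ∑ⱼ (H z)ⱼ = 2 c w`. On the other hand `Q 𝟙 = c d 𝟙`, so
splitting `z = x + (w / n) 𝟙` with `x ⟂ 𝟙` kills the cross terms, and since `‖z‖² = w` for a
0-1 vector, `zᵀ Q z ≤ λ₂ ‖x‖² + c d w² / n = λ₂ (w - w² / n) + c d w² / n`. Comparing the two
bounds and dividing by `w > 0` gives `n (2c - λ₂) ≤ w (c d - λ₂)`.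
-/

open Matrix

namespace Matrix

variable {ι κ R : Type*} [Fintype ι]

section CommRing

variable [CommRing R]

theorem mulVec_one_eq_smul_of_sum_row_eq {A : Matrix κ ι R} {d : R} (h : ∀ j, ∑ i, A j i = d) :
    A *ᵥ 1 = d • 1 := by
  ext j
  simp [mulVec, dotProduct, h]

theorem transpose_mul_self_mulVec_one [Fintype κ] {H : Matrix κ ι R} {c d : R}
    (hcol : ∀ i, ∑ j, H j i = c) (hrow : ∀ j, ∑ i, H j i = d) :
    (Hᵀ * H) *ᵥ 1 = (c * d) • 1 := by
  rw [← mulVec_mulVec, mulVec_one_eq_smul_of_sum_row_eq hrow, mulVec_smul,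
    mulVec_one_eq_smul_of_sum_row_eq (A := Hᵀ) hcol, smul_smul, mul_comm]

theorem dotProduct_transpose_mul_self_mulVec [Fintype κ] (H : Matrix κ ι R) (z : ι → R) :
    z ⬝ᵥ (Hᵀ * H) *ᵥ z = H *ᵥ z ⬝ᵥ H *ᵥ z := by
  rw [← mulVec_mulVec, dotProduct_mulVec, vecMul_transpose]

theorem sum_mulVec_eq_mul_sum [Fintype κ] {H : Matrix κ ι R} {c : R} (hcol : ∀ i, ∑ j, H j i = c)
    (z : ι → R) : ∑ j, (H *ᵥ z) j = c * ∑ i, z i := by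
  rw [← one_dotProduct, dotProduct_mulVec, ← mulVec_transpose,
    mulVec_one_eq_smul_of_sum_row_eq (A := Hᵀ) hcol, smul_dotProduct, one_dotProduct, smul_eq_mul]

theorem dotProduct_mulVec_add_smul_one {Q : Matrix ι ι R} (hQ : Q.IsSymm) {μ : R}
    (hQ1 : Q *ᵥ 1 = μ • 1) {x : ι → R} (hx : ∑ i, x i = 0) (a : R) :
    (x + a • 1) ⬝ᵥ Q *ᵥ (x + a • 1) = x ⬝ᵥ Q *ᵥ x + a ^ 2 * μ * Fintype.card ι := by
  have hx1 : x ⬝ᵥ Q *ᵥ 1 = 0 := by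
    rw [hQ1, dotProduct_smul, dotProduct_one, hx, smul_zero]
  have h1x : 1 ⬝ᵥ Q *ᵥ x = 0 := by
    rw [dotProduct_mulVec, ← mulVec_transpose, hQ.eq, hQ1, smul_dotProduct, one_dotProduct, hx,
      smul_zero]
  simp only [mulVec_add, mulVec_smul, add_dotProduct, dotProduct_add, smul_dotProduct,
    dotProduct_smul, hx1, h1x]
  rw [hQ1, dotProduct_smul, one_dotProduct_one]
  simp only [smul_eq_mul, mul_zero, zero_add]
  ring

end CommRing

theorem dotProduct_mulVec_le_of_forall_sum_eq_zero [Field R] [LinearOrder R]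
    [IsStrictOrderedRing R] {Q : Matrix ι ι R} (hQ : Q.IsSymm) {μ lam : R}
    (hQ1 : Q *ᵥ 1 = μ • 1)
    (hquad : ∀ x : ι → R, ∑ i, x i = 0 → x ⬝ᵥ Q *ᵥ x ≤ lam * (x ⬝ᵥ x))
    [Nonempty ι] (z : ι → R) :
    z ⬝ᵥ Q *ᵥ z ≤ lam * (z ⬝ᵥ z - (∑ i, z i) ^ 2 / Fintype.card ι)
      + μ * (∑ i, z i) ^ 2 / Fintype.card ι := by
  have hN : (Fintype.card ι : R) ≠ 0 := Nat.cast_ne_zero.2 Fintype.card_ne_zero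
  set a := (∑ i, z i) / Fintype.card ι with ha
  set x := z - a • 1 with hx
  have hxsum : ∑ i, x i = 0 := by
    rw [← dotProduct_one, hx, sub_dotProduct, smul_dotProduct, one_dotProduct_one, dotProduct_one,
      ha, smul_eq_mul, div_mul_cancel₀ _ hN, sub_self]
  have hxx : x ⬝ᵥ x = z ⬝ᵥ z - (∑ i, z i) ^ 2 / Fintype.card ι := by
    conv_lhs => arg 2; rw [hx]
    rw [dotProduct_sub, dotProduct_smul, dotProduct_one, hxsum, smul_zero,
      sub_zero, hx, sub_dotProduct, smul_dotProduct, one_dotProduct, smul_eq_mul, ha]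
    field_simp
  have hz : z = x + a • 1 := by rw [hx, sub_add_cancel]
  rw [hz, dotProduct_mulVec_add_smul_one hQ hQ1 hxsum, ← hz, ← hxx, ha]
  have := hquad x hxsum
  field_simp
  nlinarith

end Matrix

theorem two_mul_sum_le_dotProduct_self_of_even {κ R : Type*} [Fintype κ] [CommRing R]
    [LinearOrder R] [IsStrictOrderedRing R] {u : κ → R}
    (hu : ∀ j, ∃ k : ℤ, u j = 2 * k) : 2 * ∑ j, u j ≤ u ⬝ᵥ u := by
  rw [Finset.mul_sum]
  refine Finset.sum_le_sum fun j _ => ?_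
  obtain ⟨k, hk⟩ := hu j
  have hkk : (k : R) ≤ k ^ 2 := by exact_mod_cast Int.le_self_sq k
  rw [hk]
  nlinarith

theorem dotProduct_self_of_forall_eq_zero_or_one {ι R : Type*} [Fintype ι] [Semiring R]
    {z : ι → R} (hz : ∀ i, z i = 0 ∨ z i = 1) : z ⬝ᵥ z = ∑ i, z i :=
  Finset.sum_congr rfl fun i _ => by rcases hz i with h | h <;> simp [h]

theorem sum_pos_of_forall_eq_zero_or_one {ι R : Type*} [Fintype ι] [Semiring R]
    [PartialOrder R] [IsStrictOrderedRing R] {z : ι → R}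
    (hz01 : ∀ i, z i = 0 ∨ z i = 1) (hz : z ≠ 0) : 0 < ∑ i, z i := by
  obtain ⟨i₀, hi₀⟩ := Function.ne_iff.mp hz
  refine Finset.sum_pos' (fun i _ => ?_) ⟨i₀, Finset.mem_univ _, ?_⟩
  · rcases hz01 i with h | h <;> simp [h]
  · rcases hz01 i₀ with h | h
    · exact absurd h hi₀
    · simp [h]

theorem tanner_eigenvalue_min_distance_bound_general {r n : ℕ}
    (H : Matrix (Fin r) (Fin n) ℝ) (c d lam2 : ℝ)
    (hcol : ∀ i, ∑ j, H j i = c)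
    (hrow : ∀ j, ∑ i, H j i = d)
    (hlam : lam2 < c * d)
    (hquad : ∀ x : Fin n → ℝ, (∑ i, x i) = 0 →
      x ⬝ᵥ (Hᵀ * H).mulVec x ≤ lam2 * (x ⬝ᵥ x))
    (z : Fin n → ℝ) (hz01 : ∀ i, z i = 0 ∨ z i = 1) (hz : z ≠ 0)
    (heven : ∀ j, ∃ k : ℤ, H.mulVec z j = 2 * k) :
    (n : ℝ) * (2 * c - lam2) / (c * d - lam2) ≤ ∑ i, z i := by
  set w := ∑ i, z i
  have hw : 0 < w := sum_pos_of_forall_eq_zero_or_one hz01 hz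
  obtain ⟨i₀, -⟩ := Function.ne_iff.mp hz
  have : Nonempty (Fin n) := ⟨i₀⟩
  have hn : (0 : ℝ) < n := by exact_mod_cast i₀.pos
  have hlower : 2 * (c * w) ≤ z ⬝ᵥ (Hᵀ * H) *ᵥ z := by
    rw [dotProduct_transpose_mul_self_mulVec, ← sum_mulVec_eq_mul_sum hcol]
    exact two_mul_sum_le_dotProduct_self_of_even heven
  have hsymm : (Hᵀ * H).IsSymm := by rw [IsSymm, transpose_mul, transpose_transpose]
  have hupper := dotProduct_mulVec_le_of_forall_sum_eq_zero hsymm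
    (transpose_mul_self_mulVec_one hcol hrow) hquad z
  rw [dotProduct_self_of_forall_eq_zero_or_one hz01, Fintype.card_fin] at hupper
  have hscaled : w * (n * (2 * c - lam2)) ≤ w * (w * (c * d - lam2)) := by
    have := mul_le_mul_of_nonneg_left (hlower.trans hupper) hn.le
    have hexp : (n : ℝ) * (lam2 * (w - w ^ 2 / n) + c * d * w ^ 2 / n)
        = lam2 * (n * w - w ^ 2) + c * d * w ^ 2 := by
      field_simp
    linarith
  rw [div_le_iff₀ (sub_pos.2 hlam)]
  exact le_of_mul_le_mul_left hscaled hw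

/-- Tanner's eigenvalue bound on the minimum distance: for a `(c, d)`-regular
0-1 parity-check matrix `H` whose matrix `Q = Hᵀ·H` has second eigenvalue bound
`λ₂ < c·d` on the orthogonal complement of the all-ones vector, every nonzero
0-1 vector `z` with `H·z` even in every coordinate has weight at least
`n·(2c − λ₂)/(c·d − λ₂)`. -/
theorem tanner_eigenvalue_min_distance_bound {r n : ℕ}
    (H : Matrix (Fin r) (Fin n) ℝ) (c d lam2 : ℝ)
    (h01 : ∀ j i, H j i = 0 ∨ H j i = 1)
    (hcol : ∀ i, ∑ j, H j i = c)
    (hrow : ∀ j, ∑ i, H j i = d)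
    (hlam : lam2 < c * d)
    (hquad : ∀ x : Fin n → ℝ, (∑ i, x i) = 0 →
      x ⬝ᵥ (Hᵀ * H).mulVec x ≤ lam2 * (x ⬝ᵥ x))
    (z : Fin n → ℝ) (hz01 : ∀ i, z i = 0 ∨ z i = 1) (hz : z ≠ 0)
    (heven : ∀ j, ∃ k : ℤ, H.mulVec z j = 2 * k) :
    (n : ℝ) * (2 * c - lam2) / (c * d - lam2) ≤ ∑ i, z i :=
  tanner_eigenvalue_min_distance_bound_general H c d lam2 hcol hrow hlam hquad z hz01 hz heven
end

section
/- Let (P, L) be a finite projective plane of order q. Then for every set of t ≥ 1 distinct lines, the number of points lying on at least one of these lines is at least (q + 1)²·t / (t + q). -/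
/-!
Let `d p` be the number of the `t` chosen lines through `p`. Counting incidences gives
`∑ d p = t (q + 1)`, and counting pairs of chosen lines through a point, using that two distinct
lines meet exactly once, gives `∑ d p² = t (t + q)`. Cauchy–Schwarz over the `N` covered points,
the support of `d`, yields `t² (q + 1)² ≤ N · t (t + q)`.
-/

open Configuration Finset

theorem Finset.sq_sum_le_card_filter_ne_zero_mul_sum_sq {ι R : Type*} [Semiring R]
    [LinearOrder R] [IsStrictOrderedRing R] [ExistsAddOfLE R] (s : Finset ι) (f : ι → R) :
    (∑ i ∈ s, f i) ^ 2 ≤ #{i ∈ s | f i ≠ 0} * ∑ i ∈ s, f i ^ 2 := by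
  have hsq : ∑ i ∈ s with f i ≠ 0, f i ^ 2 = ∑ i ∈ s, f i ^ 2 :=
    sum_filter_of_ne fun _ _ h ↦ ne_zero_pow two_ne_zero h
  rw [← sum_filter_ne_zero, ← hsq]
  exact sq_sum_le_card_mul_sum_sq

namespace Configuration

variable {P L : Type*} [Membership P L] [∀ (p : P) (ℓ : L), Decidable (p ∈ ℓ)]

def lineCountIn (T : Finset L) (p : P) : ℕ := #{ℓ ∈ T | p ∈ ℓ}

section Counting

variable [Fintype P] (T : Finset L)

theorem sum_lineCountIn : ∑ p, lineCountIn T p = ∑ ℓ ∈ T, #{p | p ∈ ℓ} :=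
  sum_card_bipartiteAbove_eq_sum_card_bipartiteBelow (· ∈ ·)

theorem sum_lineCountIn_sq :
    ∑ p, lineCountIn T p ^ 2 = ∑ ℓ₁ ∈ T, ∑ ℓ₂ ∈ T, #{p | p ∈ ℓ₁ ∧ p ∈ ℓ₂} := by
  have hsq (p : P) : lineCountIn T p ^ 2 = #{x ∈ T ×ˢ T | p ∈ x.1 ∧ p ∈ x.2} := by
    rw [lineCountIn, sq, ← card_product, ← filter_product]
  simp_rw [hsq, ← sum_product']
  exact sum_card_bipartiteAbove_eq_sum_card_bipartiteBelow
    fun (p : P) (x : L × L) ↦ p ∈ x.1 ∧ p ∈ x.2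

theorem card_filter_lineCountIn_ne_zero :
    #{p | lineCountIn T p ≠ 0} = Nat.card {p : P // ∃ ℓ ∈ T, p ∈ ℓ} := by
  simp [lineCountIn, Nat.card_eq_fintype_card, Fintype.card_subtype]

end Counting

theorem card_filter_mem_and_mem_of_ne [Fintype P] [HasPoints P L] {ℓ₁ ℓ₂ : L} (h : ℓ₁ ≠ ℓ₂) :
    #{p : P | p ∈ ℓ₁ ∧ p ∈ ℓ₂} = 1 := by
  obtain ⟨p, hp, hunique⟩ := HasPoints.existsUnique_point P L ℓ₁ ℓ₂ h
  exact card_eq_one.mpr ⟨p, eq_singleton_iff_unique_mem.mpr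
    ⟨by simpa using hp, fun x hx ↦ hunique x (by simpa using hx)⟩⟩

namespace ProjectivePlane

variable [ProjectivePlane P L] [Fintype P] [Finite L] (T : Finset L)

theorem card_filter_mem (ℓ : L) : #{p : P | p ∈ ℓ} = order P L + 1 := by
  rw [← pointCount_eq P ℓ, pointCount, Nat.card_eq_fintype_card, Fintype.card_subtype]

theorem sum_lineCountIn_eq : ∑ p : P, lineCountIn T p = #T * (order P L + 1) := by
  simp [sum_lineCountIn, card_filter_mem]

theorem sum_lineCountIn_sq_eq : ∑ p : P, lineCountIn T p ^ 2 = #T * (#T + order P L) := by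
  classical
  have hrow : ∀ ℓ₁ ∈ T, ∑ ℓ₂ ∈ T, #{p : P | p ∈ ℓ₁ ∧ p ∈ ℓ₂} = #T + order P L := by
    intro ℓ₁ hℓ₁
    rw [← add_sum_erase T _ hℓ₁, sum_congr rfl fun ℓ₂ hℓ₂ ↦
      card_filter_mem_and_mem_of_ne (ne_of_mem_erase hℓ₂).symm]
    simp only [and_self, card_filter_mem, sum_const, card_erase_of_mem hℓ₁, smul_eq_mul, mul_one]
    have := card_pos.mpr ⟨ℓ₁, hℓ₁⟩
    omega
  rw [sum_lineCountIn_sq, sum_congr rfl hrow, sum_const, smul_eq_mul]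

theorem card_mul_order_add_one_sq_le :
    #T * (order P L + 1) ^ 2 ≤ Nat.card {p : P // ∃ ℓ ∈ T, p ∈ ℓ} * (#T + order P L) := by
  have hcs := sq_sum_le_card_filter_ne_zero_mul_sum_sq univ (lineCountIn (P := P) T)
  rw [sum_lineCountIn_eq, sum_lineCountIn_sq_eq, card_filter_lineCountIn_ne_zero,
    Nat.cast_id] at hcs
  rcases T.eq_empty_or_nonempty with rfl | hT
  · simp
  refine Nat.le_of_mul_le_mul_left ?_ hT.card_pos
  calc #T * (#T * (order P L + 1) ^ 2) = (#T * (order P L + 1)) ^ 2 := by ring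
    _ ≤ _ := hcs
    _ = _ := by ring

end ProjectivePlane

end Configuration

theorem projective_plane_expansion_general (P L : Type*) [Membership P L]
    [ProjectivePlane P L] [Fintype P] [Fintype L]
    (T : Finset L) :
    ((ProjectivePlane.order P L : ℝ) + 1) ^ 2 * T.card /
        (T.card + (ProjectivePlane.order P L : ℝ)) ≤
      (Nat.card {p : P // ∃ ℓ ∈ T, p ∈ ℓ} : ℝ) := by
  classical
  have hq : (0 : ℝ) < T.card + ProjectivePlane.order P L := by
    have := ProjectivePlane.one_lt_order P L
    positivity
  rw [div_le_iff₀ hq, mul_comm]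
  exact_mod_cast ProjectivePlane.card_mul_order_add_one_sq_le T

/-- In a finite projective plane of order `q`, any `t ≥ 1` distinct lines cover
at least `(q+1)²·t / (t + q)` points. -/
theorem projective_plane_expansion (P L : Type*) [Membership P L]
    [ProjectivePlane P L] [Fintype P] [Fintype L]
    (T : Finset L) (hT : T.Nonempty) :
    ((ProjectivePlane.order P L : ℝ) + 1) ^ 2 * T.card /
        (T.card + (ProjectivePlane.order P L : ℝ)) ≤
      (Nat.card {p : P // ∃ ℓ ∈ T, p ∈ ℓ} : ℝ) :=
  projective_plane_expansion_general P L T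
end

section
/- Let B_1, …, B_n be finite sets, each of size exactly c, and let S = B_1 △ B_2 be the symmetric difference of the first two. Suppose that for every index j ∉ {1, 2} one has c > |B_1 ∩ B_2| + |B_1 ∩ B_j| + |B_2 ∩ B_j| − 2·|B_1 ∩ B_2 ∩ B_j|. Then |B_1 ∩ S| = |B_2 ∩ S| = c − |B_1 ∩ B_2|, and |B_k ∩ S| > |B_j ∩ S| for each k ∈ {1, 2} and each j ∉ {1, 2}. (Thus the bit-flipping algorithm, which flips a variable whose block has the largest intersection with the syndrome, chooses one of the two erroneous positions.) -/
/-! Inclusion–exclusion gives `|D ∩ (B₀ △ B₁)| = |D ∩ B₀| + |D ∩ B₁| - 2 |D ∩ B₀ ∩ B₁|` for every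
set `D`. For `D = B₀` or `D = B₁` this is `c - |B₀ ∩ B₁|`, and for any other block the hypothesis
says precisely that it is smaller than that. -/

open Finset

open scoped symmDiff

namespace Finset

variable {α : Type*} [DecidableEq α]

theorem card_symmDiff_add_two_mul_card_inter (s t : Finset α) :
    #(s ∆ t) + 2 * #(s ∩ t) = #s + #t := by
  have hunion : #(s ∪ t) = #(s ∆ t) + #(s ∩ t) := by
    have hsplit : s ∆ t ∪ s ∩ t = s ∪ t := symmDiff_sup_inf s t
    rw [← hsplit]
    exact card_union_of_disjoint (disjoint_symmDiff_inf s t)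
  have := card_union_add_card_inter s t
  omega

theorem card_symmDiff_inter_add_two_mul_card_inter_inter (s t u : Finset α) :
    #(s ∆ t ∩ u) + 2 * #(s ∩ t ∩ u) = #(s ∩ u) + #(t ∩ u) := by
  have hdistrib : s ∆ t ∩ u = (s ∩ u) ∆ (t ∩ u) := inf_symmDiff_distrib_right s t u
  rw [hdistrib, inter_inter_distrib_right]
  exact card_symmDiff_add_two_mul_card_inter _ _

end Finset

/-- Two errors: for blocks `B 0, B 1, …` of common size `c` with syndrome
`S = B 0 △ B 1`, if `c > |B 0 ∩ B 1| + |B 0 ∩ B j| + |B 1 ∩ B j| − 2·|B 0 ∩ B 1 ∩ B j|`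
for every other index `j`, then `|B 0 ∩ S| = |B 1 ∩ S| = c − |B 0 ∩ B 1|` and
the two erroneous blocks have strictly larger intersection with `S` than any
other block, so the bit-flipping algorithm flips an erroneous position. -/
theorem two_errors_bit_flip_succeeds {α : Type*} [DecidableEq α] {n c : ℕ}
    (B : Fin (n + 2) → Finset α) (hB : ∀ i, (B i).card = c)
    (hj : ∀ j : Fin (n + 2), j ≠ 0 → j ≠ 1 →
      ((B 0 ∩ B 1).card + (B 0 ∩ B j).card + (B 1 ∩ B j).card
        - 2 * (B 0 ∩ B 1 ∩ B j).card : ℤ) < c) :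
    (B 0 ∩ symmDiff (B 0) (B 1)).card = c - (B 0 ∩ B 1).card ∧
    (B 1 ∩ symmDiff (B 0) (B 1)).card = c - (B 0 ∩ B 1).card ∧
    (∀ j : Fin (n + 2), j ≠ 0 → j ≠ 1 →
      (B j ∩ symmDiff (B 0) (B 1)).card < (B 0 ∩ symmDiff (B 0) (B 1)).card ∧
      (B j ∩ symmDiff (B 0) (B 1)).card < (B 1 ∩ symmDiff (B 0) (B 1)).card) := by
  have card_inter_syndrome (i : Fin (n + 2)) :
      #(B i ∩ B 0 ∆ B 1) + 2 * #(B 0 ∩ B 1 ∩ B i) = #(B 0 ∩ B i) + #(B 1 ∩ B i) := by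
    rw [inter_comm]
    exact card_symmDiff_inter_add_two_mul_card_inter_inter _ _ _
  have hB0 := card_inter_syndrome 0
  have hB1 := card_inter_syndrome 1
  rw [inter_right_comm, inter_self, inter_comm (B 1), hB] at hB0
  rw [inter_right_idem, inter_self, hB] at hB1
  refine ⟨by omega, by omega, fun j hj0 hj1 => ?_⟩
  have hBj := card_inter_syndrome j
  have := hj j hj0 hj1
  omega
end

section
/- Let B_1, B_2, B_3 be finite sets, each of size exactly 5, forming a triangle: |B_i ∩ B_j| = 1 for all i ≠ j and B_1 ∩ B_2 ∩ B_3 = ∅, and let S = B_1 △ B_2 △ B_3. Let B_4 be a further set of size 5 with |B_4 ∩ B_i| = 1 for each i ∈ {1, 2, 3} and B_4 ∩ B_i ∩ B_j = ∅ for all distinct i, j ∈ {1, 2, 3}. Then |B_4 ∩ S| = 3, which equals |B_i ∩ S| for i ∈ {1, 2, 3}, and the updated syndrome S △ B_4 has exactly 8 elements. (Hence for block size c = 5 the bit-flipping algorithm may flip the non-erroneous position 4 and then fails, since a syndrome of size 8 cannot equal a symmetric difference B_i △ B_j of two of the original blocks.) -/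
/-!
A point lies in `s ∆ t ∆ u` iff it lies in an odd number of `s, t, u`, so inclusion–exclusion
gives `|A ∩ (s ∆ t ∆ u)| = Σ |A ∩ s| - 2 Σ |A ∩ s ∩ t| + 4 |A ∩ s ∩ t ∩ u|`. For the triangle
each block `Bᵢ` meets `S` in `5 - 1 - 1 = 3` points, `B₄` meets it in `1 + 1 + 1 = 3` points,
and `|S| = 15 - 2 · 3 = 9`; hence `|S ∆ B₄| = 9 + 5 - 2 · 3 = 8`.
-/

open scoped symmDiff

namespace Finset

variable {α : Type*} [DecidableEq α]

theorem inter_symmDiff_distrib_left (s t u : Finset α) : s ∩ t ∆ u = (s ∩ t) ∆ (s ∩ u) :=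
  inf_symmDiff_distrib_left s t u

theorem symmDiff_inter_distrib_right (s t u : Finset α) : s ∆ t ∩ u = (s ∩ u) ∆ (t ∩ u) :=
  inf_symmDiff_distrib_right s t u

theorem card_symmDiff_eq (s t : Finset α) : (#(s ∆ t) : ℤ) = #s + #t - 2 * #(s ∩ t) := by
  have hs := card_sdiff_add_card_inter s t
  have ht := card_sdiff_add_card_inter t s
  rw [symmDiff_def, sup_eq_union, card_union_of_disjoint disjoint_sdiff_sdiff]
  rw [inter_comm t] at ht
  push_cast
  omega

theorem card_symmDiff_symmDiff_eq (s t u : Finset α) :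
    (#(s ∆ t ∆ u) : ℤ) = #s + #t + #u
      - 2 * (#(s ∩ t) + #(s ∩ u) + #(t ∩ u)) + 4 * #(s ∩ t ∩ u) := by
  rw [card_symmDiff_eq, card_symmDiff_eq, symmDiff_inter_distrib_right, card_symmDiff_eq,
    ← inter_inter_distrib_right]
  ring

theorem card_inter_symmDiff_symmDiff_eq (a s t u : Finset α) :
    (#(a ∩ (s ∆ t ∆ u)) : ℤ) = #(a ∩ s) + #(a ∩ t) + #(a ∩ u)
      - 2 * (#(a ∩ s ∩ t) + #(a ∩ s ∩ u) + #(a ∩ t ∩ u)) + 4 * #(a ∩ s ∩ t ∩ u) := by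
  rw [inter_symmDiff_distrib_left, inter_symmDiff_distrib_left, card_symmDiff_symmDiff_eq]
  simp only [← inter_inter_distrib_left]
  simp only [← inter_assoc]

theorem card_inter_symmDiff_symmDiff_self (s t u : Finset α) :
    (#(s ∩ (s ∆ t ∆ u)) : ℤ) = #s - #(s ∩ t) - #(s ∩ u) + 2 * #(s ∩ t ∩ u) := by
  rw [card_inter_symmDiff_symmDiff_eq, inter_self]
  ring

end Finset

open Finset

/-- Three errors and block size `c = 5`: for a triangle `B₁, B₂, B₃` with
syndrome `S = B₁ △ B₂ △ B₃` and a fourth block `B₄` meeting each `Bᵢ` in one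
point with no triple intersections, the block `B₄` meets `S` in 3 points —
as many as each erroneous block — and flipping position 4 yields the updated
syndrome `S △ B₄` of exactly 8 elements, so the bit-flipping algorithm may
flip the non-erroneous position 4 and then fails. -/
theorem three_errors_bit_flip_may_fail {α : Type*} [DecidableEq α]
    (B₁ B₂ B₃ B₄ : Finset α)
    (h1 : B₁.card = 5) (h2 : B₂.card = 5) (h3 : B₃.card = 5) (h4 : B₄.card = 5)
    (h12 : (B₁ ∩ B₂).card = 1) (h13 : (B₁ ∩ B₃).card = 1)
    (h23 : (B₂ ∩ B₃).card = 1) (h123 : B₁ ∩ B₂ ∩ B₃ = ∅)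
    (h41 : (B₄ ∩ B₁).card = 1) (h42 : (B₄ ∩ B₂).card = 1)
    (h43 : (B₄ ∩ B₃).card = 1)
    (h412 : B₄ ∩ B₁ ∩ B₂ = ∅) (h413 : B₄ ∩ B₁ ∩ B₃ = ∅)
    (h423 : B₄ ∩ B₂ ∩ B₃ = ∅) :
    (B₄ ∩ symmDiff (symmDiff B₁ B₂) B₃).card = 3 ∧
    (B₁ ∩ symmDiff (symmDiff B₁ B₂) B₃).card = 3 ∧
    (B₂ ∩ symmDiff (symmDiff B₁ B₂) B₃).card = 3 ∧
    (B₃ ∩ symmDiff (symmDiff B₁ B₂) B₃).card = 3 ∧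
    (symmDiff (symmDiff (symmDiff B₁ B₂) B₃) B₄).card = 8 := by
  have hS₄ : (#(B₄ ∩ (B₁ ∆ B₂ ∆ B₃)) : ℤ) = 3 := by
    rw [card_inter_symmDiff_symmDiff_eq, h41, h42, h43, h412, h413, h423, empty_inter]
    norm_num
  have hS₁ : (#(B₁ ∩ (B₁ ∆ B₂ ∆ B₃)) : ℤ) = 3 := by
    rw [card_inter_symmDiff_symmDiff_self, h1, h12, h13, h123]
    norm_num
  have hS₂ : (#(B₂ ∩ (B₁ ∆ B₂ ∆ B₃)) : ℤ) = 3 := by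
    rw [symmDiff_comm B₁, card_inter_symmDiff_symmDiff_self, inter_comm B₂ B₁, h2, h12, h23, h123]
    norm_num
  have hS₃ : (#(B₃ ∩ (B₁ ∆ B₂ ∆ B₃)) : ℤ) = 3 := by
    rw [symmDiff_comm _ B₃, ← symmDiff_assoc, card_inter_symmDiff_symmDiff_self,
      inter_comm B₃ B₁, inter_comm B₃ B₂, inter_right_comm, h3, h13, h23, h123]
    norm_num
  have hS : (#(B₁ ∆ B₂ ∆ B₃) : ℤ) = 9 := by
    rw [card_symmDiff_symmDiff_eq, h1, h2, h3, h12, h13, h23, h123]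
    norm_num
  have hflip : (#(B₁ ∆ B₂ ∆ B₃ ∆ B₄) : ℤ) = 8 := by
    rw [card_symmDiff_eq, hS, h4, inter_comm, hS₄]
    norm_num
  exact ⟨mod_cast hS₄, mod_cast hS₁, mod_cast hS₂, mod_cast hS₃, mod_cast hflip⟩
end
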